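/- arXiv:2406.05805 — 4 statements merged into one kernel-verified Lean document; each statement's English description precedes it below -/
import Mathlib

section
/- Let G^s be an SCG, let X ≠ Y be macro vertices, let 𝕎 be a set of macro vertices with X, Y ∉ 𝕎, let 0 ≤ γ ≤ γmax, and assume t0 ≤ t − γ and t ≤ tmax. If 𝕎 intercepts every directed path from X to Y in G^s, then in every candidate FT-ADMG G ∈ C(G^s) the micro-vertex set {W_{t−γ+ℓ} : W ∈ 𝕎, 0 ≤ ℓ ≤ γ} intercepts every directed path from X_{t−γ} to Y_t in G. -/
/-!
Common definitions: mixed paths, full-time acyclic directed mixed graphs (FT-ADMGs),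
summary causal graphs (SCGs), candidate FT-ADMGs, and the SCG-front-door conditions.

Micro vertices are pairs `(i, t) : Fin d × ℤ` (time series index, time);
macro vertices are elements of `Fin d`.
-/

/-- The type of an edge as traversed on a path of a mixed graph:
`fwd` = directed edge pointing towards the next vertex, `bwd` = directed edge
pointing towards the previous vertex, `bid` = bidirected edge. -/
inductive EdgeT : Type
  | fwd
  | bwd
  | bid
  deriving DecidableEq

/-- The edge (as traversed left-to-right) has an arrowhead at its right endpoint. -/
def EdgeT.headRight : EdgeT → Prop
  | .fwd => True
  | .bwd => False
  | .bid => True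

/-- The edge (as traversed left-to-right) has an arrowhead at its left endpoint. -/
def EdgeT.headLeft : EdgeT → Prop
  | .fwd => False
  | .bwd => True
  | .bid => True

/-- A path (sequence of distinct vertices, successive ones joined by an edge) in a
mixed graph with directed relation `dir` and bidirected relation `bi`. -/
structure MPath (V : Type) (dir bi : V → V → Prop) (n : ℕ) where
  v : Fin (n + 1) → V
  e : Fin n → EdgeT
  inj : Function.Injective v
  valid_fwd : ∀ k : Fin n, e k = .fwd → dir (v k.castSucc) (v k.succ)
  valid_bwd : ∀ k : Fin n, e k = .bwd → dir (v k.succ) (v k.castSucc)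
  valid_bid : ∀ k : Fin n, e k = .bid → bi (v k.castSucc) (v k.succ)

namespace MPath

variable {V : Type} {dir bi : V → V → Prop} {n : ℕ}

/-- A directed path: all edges are directed towards the last vertex. -/
def IsDirected (p : MPath V dir bi n) : Prop :=
  ∀ k : Fin n, p.e k = EdgeT.fwd

/-- The internal vertex at position `i` is a collider: both path edges at it
have an arrowhead at it. -/
def Collider (p : MPath V dir bi n) (i : ℕ) (h1 : 0 < i) (h2 : i < n) : Prop :=
  (p.e ⟨i - 1, by omega⟩).headRight ∧ (p.e ⟨i, h2⟩).headLeft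

/-- The path contains no collider (hence it is active given the empty set). -/
def ColliderFree (p : MPath V dir bi n) : Prop :=
  ∀ (i : ℕ) (h1 : 0 < i) (h2 : i < n), ¬ p.Collider i h1 h2

/-- The path is blocked by the set `Z`: some non-collider on the path belongs to `Z`,
or some collider on the path has no descendant in `Z`. -/
def BlockedBy (p : MPath V dir bi n) (Z : Set V) : Prop :=
  ∃ (i : ℕ) (h1 : 0 < i) (h2 : i < n),
    (¬ p.Collider i h1 h2 ∧ p.v ⟨i, by omega⟩ ∈ Z) ∨
    (p.Collider i h1 h2 ∧ ∀ w, Relation.ReflTransGen dir (p.v ⟨i, by omega⟩) w → w ∉ Z)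

end MPath

/-- A full-time acyclic directed mixed graph over `d` time series, time window
`{t0, …, tmax}` and maximal lag `γmax`: directed edges go forward in time with lag
at most `γmax`, the directed part is acyclic, and the graph is stationary. -/
structure FTADMG (d : ℕ) (t0 tmax : ℤ) (γmax : ℕ) where
  dir : Fin d × ℤ → Fin d × ℤ → Prop
  bi : Fin d × ℤ → Fin d × ℤ → Prop
  dir_window : ∀ a b, dir a b → t0 ≤ a.2 ∧ a.2 ≤ tmax ∧ t0 ≤ b.2 ∧ b.2 ≤ tmax
  dir_time : ∀ a b, dir a b → a.2 ≤ b.2 ∧ b.2 - a.2 ≤ (γmax : ℤ)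
  bi_window : ∀ a b, bi a b → t0 ≤ a.2 ∧ a.2 ≤ tmax ∧ t0 ≤ b.2 ∧ b.2 ≤ tmax
  bi_symm : ∀ a b, bi a b → bi b a
  acyclic : ∀ a, ¬ Relation.TransGen dir a a
  stat_dir : ∀ (i j : Fin d) (t' t δ : ℤ),
    t0 ≤ t' → t' ≤ tmax → t0 ≤ t → t ≤ tmax →
    t0 ≤ t' + δ → t' + δ ≤ tmax → t0 ≤ t + δ → t + δ ≤ tmax →
    (dir (i, t') (j, t) ↔ dir (i, t' + δ) (j, t + δ))
  stat_bi : ∀ (i j : Fin d) (t' t δ : ℤ),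
    t0 ≤ t' → t' ≤ tmax → t0 ≤ t → t ≤ tmax →
    t0 ≤ t' + δ → t' + δ ≤ tmax → t0 ≤ t + δ → t + δ ≤ tmax →
    (bi (i, t') (j, t) ↔ bi (i, t' + δ) (j, t + δ))

/-- A summary causal graph over `d` time series (macro vertices). -/
structure SCG (d : ℕ) where
  dir : Fin d → Fin d → Prop
  bi : Fin d → Fin d → Prop

/-- `G` is a candidate FT-ADMG for the SCG `Gs`: the SCG compatible with `G` is `Gs`. -/
def IsCandidate {d : ℕ} {t0 tmax : ℤ} {γmax : ℕ} (Gs : SCG d)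
    (G : FTADMG d t0 tmax γmax) : Prop :=
  (∀ i j : Fin d, Gs.dir i j ↔ ∃ t' t : ℤ, G.dir (i, t') (j, t)) ∧
  (∀ i j : Fin d, Gs.bi i j ↔ ∃ t' t : ℤ, G.bi (i, t') (j, t))

namespace SCG

variable {d : ℕ}

/-- The path `p` (with `p.v 0 = X`) is a back-door path: it starts with
`X ←`, `X ↔`, or `X ⇄`. -/
def BackdoorStart (Gs : SCG d) {n : ℕ} (p : MPath (Fin d) Gs.dir Gs.bi n)
    (hn : 0 < n) : Prop :=
  p.e ⟨0, hn⟩ = EdgeT.bwd ∨ p.e ⟨0, hn⟩ = EdgeT.bid ∨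
    (p.e ⟨0, hn⟩ = EdgeT.fwd ∧ Gs.dir (p.v ⟨1, by omega⟩) (p.v 0))

/-- Strict collider at internal position `i` of an SCG path: configuration `→ C ←`,
and not `⇄ C ←` nor `→ C ⇄`. -/
def StrictCollider (Gs : SCG d) {n : ℕ} (p : MPath (Fin d) Gs.dir Gs.bi n)
    (i : ℕ) (h1 : 0 < i) (h2 : i < n) : Prop :=
  p.e ⟨i - 1, by omega⟩ = EdgeT.fwd ∧ p.e ⟨i, h2⟩ = EdgeT.bwd ∧
  ¬ Gs.dir (p.v ⟨i, by omega⟩) (p.v ⟨i - 1, by omega⟩) ∧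
  ¬ Gs.dir (p.v ⟨i, by omega⟩) (p.v ⟨i + 1, by omega⟩)

/-- Strict non-collider at internal position `i` of an SCG path:
configuration `→ C →`, `← C →`, or `← C ⇄`, and not `⇄ C ←`. -/
def StrictNonCollider (Gs : SCG d) {n : ℕ} (p : MPath (Fin d) Gs.dir Gs.bi n)
    (i : ℕ) (h1 : 0 < i) (h2 : i < n) : Prop :=
  (p.e ⟨i - 1, by omega⟩ = EdgeT.fwd ∧ p.e ⟨i, h2⟩ = EdgeT.fwd) ∨
  (p.e ⟨i - 1, by omega⟩ = EdgeT.bwd ∧ p.e ⟨i, h2⟩ = EdgeT.fwd) ∨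
  (p.e ⟨i - 1, by omega⟩ = EdgeT.bwd ∧ p.e ⟨i, h2⟩ = EdgeT.bwd ∧
    Gs.dir (p.v ⟨i, by omega⟩) (p.v ⟨i + 1, by omega⟩))

/-- The SCG path is activated by the empty set: it contains no strict collider. -/
def ActiveEmpty (Gs : SCG d) {n : ℕ} (p : MPath (Fin d) Gs.dir Gs.bi n) : Prop :=
  ∀ (i : ℕ) (h1 : 0 < i) (h2 : i < n), ¬ Gs.StrictCollider p i h1 h2

/-- The SCG back-door path `p` is blocked by `{X}`: it contains a strict collider `C`
with `X ∉ Desc(C, Gs)`, or it contains `X` as a strict non-collider together with a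
directed edge from `X` to a vertex on the path that does not form a directed cycle
with `X`. -/
def BlockedByOne (Gs : SCG d) {n : ℕ} (p : MPath (Fin d) Gs.dir Gs.bi n)
    (X : Fin d) : Prop :=
  (∃ (i : ℕ) (h1 : 0 < i) (h2 : i < n),
    Gs.StrictCollider p i h1 h2 ∧
      ¬ Relation.ReflTransGen Gs.dir (p.v ⟨i, by omega⟩) X) ∨
  (∃ (i : ℕ) (h1 : 0 < i) (h2 : i < n),
    p.v ⟨i, by omega⟩ = X ∧ Gs.StrictNonCollider p i h1 h2 ∧
      ∃ j : Fin (n + 1), Gs.dir X (p.v j) ∧ ¬ Relation.ReflTransGen Gs.dir (p.v j) X)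

/-- Condition 1 of the SCG-front-door criterion:
`Ws` intercepts every directed path from `X` to `Y` in `Gs`. -/
def Cond1 (Gs : SCG d) (X Y : Fin d) (Ws : Set (Fin d)) : Prop :=
  ∀ (n : ℕ) (p : MPath (Fin d) Gs.dir Gs.bi n),
    p.IsDirected → p.v 0 = X → p.v (Fin.last n) = Y → ∃ i, p.v i ∈ Ws

/-- Condition 2 of the SCG-front-door criterion:
no back-door path from `X` to a vertex of `Ws` in `Gs` is activated by the empty set. -/
def Cond2 (Gs : SCG d) (X : Fin d) (Ws : Set (Fin d)) : Prop :=
  ∀ (n : ℕ) (hn : 0 < n) (p : MPath (Fin d) Gs.dir Gs.bi n),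
    p.v 0 = X → p.v (Fin.last n) ∈ Ws → Gs.BackdoorStart p hn → ¬ Gs.ActiveEmpty p

/-- Condition 3 of the SCG-front-door criterion:
every back-door path from a vertex of `Ws` to `Y` in `Gs` is blocked by `{X}`. -/
def Cond3 (Gs : SCG d) (X Y : Fin d) (Ws : Set (Fin d)) : Prop :=
  ∀ (n : ℕ) (hn : 0 < n) (p : MPath (Fin d) Gs.dir Gs.bi n),
    p.v 0 ∈ Ws → p.v (Fin.last n) = Y → Gs.BackdoorStart p hn → Gs.BlockedByOne p X

/-- Conditions 1–3 of the SCG-front-door criterion relative to `(X_{t-γ}, Y_t)`. -/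
def FrontDoor123 (Gs : SCG d) (X Y : Fin d) (Ws : Set (Fin d)) : Prop :=
  Gs.Cond1 X Y Ws ∧ Gs.Cond2 X Ws ∧ Gs.Cond3 X Y Ws

end SCG

/-- The micro-vertex set `F = {W_{t-γ+ℓ} : W ∈ Ws, 0 ≤ ℓ ≤ γ}`. -/
def Fset {d : ℕ} (Ws : Set (Fin d)) (t : ℤ) (γ : ℕ) : Set (Fin d × ℤ) :=
  {a | a.1 ∈ Ws ∧ ∃ ℓ : ℤ, 0 ≤ ℓ ∧ ℓ ≤ (γ : ℤ) ∧ a.2 = t - (γ : ℤ) + ℓ}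

/-- From any walk (indexed by ℕ) along a relation `R`, one can extract an injective
walk with the same endpoints whose vertices all occur on the original walk. -/
lemma walk_extract {V : Type} (R : V → V → Prop) :
    ∀ (m : ℕ) (f : ℕ → V), (∀ k, k < m → R (f k) (f (k + 1))) →
      ∃ (n : ℕ) (g : ℕ → V),
        g 0 = f 0 ∧ g n = f m ∧
        (∀ k, k < n → R (g k) (g (k + 1))) ∧
        (∀ k l, k ≤ n → l ≤ n → g k = g l → k = l) ∧
        (∀ k, k ≤ n → ∃ j, j ≤ m ∧ g k = f j) := by
  intro m
  induction m using Nat.strong_induction_on with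
  | _ m IH =>
    intro f hf
    by_cases hinj : ∀ k l, k ≤ m → l ≤ m → f k = f l → k = l
    · exact ⟨m, f, rfl, rfl, hf, hinj, fun k hk => ⟨k, hk, rfl⟩⟩
    · push_neg at hinj
      obtain ⟨k, l, hk, hl, hfe, hne⟩ := hinj
      have hex : ∃ i j, i < j ∧ j ≤ m ∧ f i = f j := by
        rcases Nat.lt_or_ge k l with h | h
        · exact ⟨k, l, h, hl, hfe⟩
        · exact ⟨l, k, by omega, hk, hfe.symm⟩
      obtain ⟨i, j, hij, hjm, hfij⟩ := hex
      set m' := m - (j - i) with hm'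
      set f' : ℕ → V := fun k => if k ≤ i then f k else f (k + (j - i)) with hf'
      have hm'lt : m' < m := by omega
      have hedge : ∀ k, k < m' → R (f' k) (f' (k + 1)) := by
        intro k hk
        by_cases h1 : k + 1 ≤ i
        · have hk1 : k ≤ i := by omega
          simp only [hf', if_pos h1, if_pos hk1]
          exact hf k (by omega)
        · by_cases h2 : k ≤ i
          · have hki : k = i := by omega
            subst hki
            have e1 : k + 1 + (j - k) = j + 1 := by omega
            simp only [hf']
            rw [if_pos (le_refl k), if_neg h1, e1, hfij]
            exact hf j (by omega)
          · have e1 : k + 1 + (j - i) = (k + (j - i)) + 1 := by omega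
            simp only [hf', if_neg h2, if_neg h1, e1]
            exact hf (k + (j - i)) (by omega)
      obtain ⟨n, g, hg0, hgn, hge, hginj, hgmem⟩ := IH m' hm'lt f' hedge
      refine ⟨n, g, ?_, ?_, hge, hginj, ?_⟩
      · rw [hg0]; simp [hf', Nat.zero_le]
      · rw [hgn]
        by_cases h : m' ≤ i
        · have h1 : m' = i := by omega
          have h2 : m = j := by omega
          simp [hf', h1, h2, hfij]
        · have e1 : m' + (j - i) = m := by omega
          simp only [hf', if_neg h, e1]
      · intro k hkn
        obtain ⟨j', hj', hgf⟩ := hgmem k hkn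
        by_cases h : j' ≤ i
        · exact ⟨j', by omega, by simpa [hf', if_pos h] using hgf⟩
        · exact ⟨j' + (j - i), by omega, by simpa [hf', if_neg h] using hgf⟩

/-- If `Ws` intercepts all directed paths from `X` to `Y` in the SCG
`Gs`, then `{W_{t-γ+ℓ} : W ∈ Ws, 0 ≤ ℓ ≤ γ}` intercepts all directed paths from
`X_{t-γ}` to `Y_t` in every candidate FT-ADMG of `Gs`. -/
theorem interception_transfer {d : ℕ} {t0 tmax : ℤ} {γmax : ℕ}
    (Gs : SCG d) (X Y : Fin d) (Ws : Set (Fin d))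
    (hXY : X ≠ Y) (hXWs : X ∉ Ws) (hYWs : Y ∉ Ws)
    (γ : ℕ) (hγ : γ ≤ γmax) (t : ℤ) (ht0 : t0 ≤ t - (γ : ℤ)) (ht : t ≤ tmax)
    (hint : Gs.Cond1 X Y Ws) :
    ∀ G : FTADMG d t0 tmax γmax, IsCandidate Gs G →
      ∀ (n : ℕ) (p : MPath (Fin d × ℤ) G.dir G.bi n),
        p.IsDirected → p.v 0 = (X, t - (γ : ℤ)) → p.v (Fin.last n) = (Y, t) →
        ∃ i : Fin (n + 1), p.v i ∈ Fset Ws t γ := by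
  intro G hG n p hdir hv0 hvlast
  -- macro projection of the micro path, as an ℕ-indexed walk
  set f : ℕ → Fin d := fun k => (p.v ⟨min k n, by omega⟩).1 with hf
  have hfe : ∀ k, k < n → Gs.dir (f k) (f (k + 1)) := by
    intro k hk
    have hmk : min k n = k := by omega
    have hmk1 : min (k + 1) n = k + 1 := by omega
    have hdk := p.valid_fwd ⟨k, hk⟩ (hdir ⟨k, hk⟩)
    have : G.dir (p.v ⟨k, by omega⟩) (p.v ⟨k + 1, by omega⟩) := hdk
    rw [(hG.1 (f k) (f (k + 1)))]
    refine ⟨(p.v ⟨k, by omega⟩).2, (p.v ⟨k + 1, by omega⟩).2, ?_⟩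
    simp only [hf, hmk, hmk1]
    simpa using this
  obtain ⟨n', g, hg0, hgn, hge, hginj, hgmem⟩ := walk_extract Gs.dir n f hfe
  -- build the macro SCG directed path
  set q : MPath (Fin d) Gs.dir Gs.bi n' :=
    { v := fun i => g i.val
      e := fun _ => EdgeT.fwd
      inj := by
        intro a b h
        exact Fin.ext (hginj a.val b.val (by omega) (by omega) h)
      valid_fwd := by
        intro k _
        exact hge k.val k.isLt
      valid_bwd := fun k h => nomatch h
      valid_bid := fun k h => nomatch h } with hq
  have hq0 : q.v 0 = X := by
    show g (0 : Fin (n' + 1)).val = X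
    rw [Fin.val_zero, hg0]
    simp only [hf, Nat.min_eq_left (Nat.zero_le n)]
    have : p.v ⟨0, by omega⟩ = (X, t - (γ : ℤ)) := by
      simpa using hv0
    rw [this]
  have hqlast : q.v (Fin.last n') = Y := by
    show g (Fin.last n').val = Y
    rw [Fin.val_last, hgn]
    simp only [hf, Nat.min_self]
    have : p.v ⟨n, by omega⟩ = (Y, t) := by
      simpa [Fin.last] using hvlast
    rw [this]
  obtain ⟨i, hi⟩ := hint n' q (fun _ => rfl) hq0 hqlast
  obtain ⟨j, hjn, hgfj⟩ := hgmem i.val (by omega)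
  have hmj : min j n = j := by omega
  have hW : (p.v ⟨j, by omega⟩).1 ∈ Ws := by
    have : q.v i = g i.val := rfl
    rw [this, hgfj] at hi
    simpa only [hf, hmj] using hi
  -- time monotonicity along the directed micro path
  have step : ∀ k (hk : k < n),
      (p.v ⟨k, by omega⟩).2 ≤ (p.v ⟨k + 1, by omega⟩).2 := by
    intro k hk
    have hdk := p.valid_fwd ⟨k, hk⟩ (hdir ⟨k, hk⟩)
    exact (G.dir_time _ _ hdk).1
  have mono : ∀ b (hb : b ≤ n) a (hab : a ≤ b),
      (p.v ⟨a, by omega⟩).2 ≤ (p.v ⟨b, by omega⟩).2 := by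
    intro b
    induction b with
    | zero =>
      intro _ a hab
      have ha : a = 0 := Nat.le_zero.mp hab
      subst ha
      exact le_refl _
    | succ b ih =>
      intro hb a hab
      by_cases h : a ≤ b
      · exact le_trans (ih (by omega) a h) (step b (by omega))
      · have : a = b + 1 := by omega
        subst this; exact le_refl _
  have h0j : (t - (γ : ℤ)) ≤ (p.v ⟨j, by omega⟩).2 := by
    have h0 : p.v ⟨0, by omega⟩ = (X, t - (γ : ℤ)) := by rw [Fin.mk_zero]; exact hv0
    have := mono j hjn 0 (Nat.zero_le j)
    rwa [h0] at this
  have hjn' : (p.v ⟨j, by omega⟩).2 ≤ t := by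
    have hn : p.v ⟨n, by omega⟩ = (Y, t) := by simpa [Fin.last] using hvlast
    have := mono n (le_refl n) j hjn
    rwa [hn] at this
  exact ⟨⟨j, by omega⟩, hW, (p.v ⟨j, by omega⟩).2 - (t - (γ : ℤ)),
    by omega, by omega, by omega⟩
end

section
/- (Property 1) Let G^s be an SCG with distinct macro vertices X and W such that there is no back-door path from X to W in G^s. Then in every candidate FT-ADMG G ∈ C(G^s), every back-door path from X_{t−γ} to W_{t−λ} in G that contains no collider (i.e., is active given the empty set) passes through a micro vertex X_{t−λ'} of the macro vertex X with λ' ≠ γ. -/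
theorem extract_backdoor {V : Type} {dir bi : V → V → Prop} {X W : V} (hXW : X ≠ W) :
    ∀ n : ℕ, 0 < n → ∀ (v : ℕ → V) (e : ℕ → EdgeT),
    (∀ k, k < n → e k = EdgeT.fwd → dir (v k) (v (k+1))) →
    (∀ k, k < n → e k = EdgeT.bwd → dir (v (k+1)) (v k)) →
    (∀ k, k < n → e k = EdgeT.bid → bi (v k) (v (k+1))) →
    v 0 = X → v n = W →
    (∀ k, 0 < k → k ≤ n → v k ≠ X) →
    (e 0 = EdgeT.bwd ∨ e 0 = EdgeT.bid) →
    ∃ (m : ℕ) (hm : 0 < m) (p : MPath V dir bi m),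
      p.v 0 = X ∧ p.v (Fin.last m) = W ∧
        (p.e ⟨0, hm⟩ = EdgeT.bwd ∨ p.e ⟨0, hm⟩ = EdgeT.bid) := by
  intro n
  induction n using Nat.strong_induction_on with
  | _ n IH =>
    intro hn v e hfwd hbwd hbid hv0 hvn hX he0
    by_cases hinj : ∀ a b, a ≤ n → b ≤ n → v a = v b → a = b
    · refine ⟨n, hn, ⟨fun i => v i.val, fun k => e k.val, ?_, ?_, ?_, ?_⟩, hv0, hvn, he0⟩
      · intro i j h
        exact Fin.ext (hinj i.val j.val (by omega) (by omega) h)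
      · intro k hk; exact hfwd k.val k.isLt hk
      · intro k hk; exact hbwd k.val k.isLt hk
      · intro k hk; exact hbid k.val k.isLt hk
    · push_neg at hinj
      obtain ⟨a0, b0, ha0, hb0, hvab0, hne0⟩ := hinj
      obtain ⟨a, b, hab, hbn, hvab⟩ : ∃ a b, a < b ∧ b ≤ n ∧ v a = v b := by
        rcases Nat.lt_or_ge a0 b0 with h | h
        · exact ⟨a0, b0, h, hb0, hvab0⟩
        · exact ⟨b0, a0, by omega, ha0, hvab0.symm⟩
      have ha1 : 1 ≤ a := by
        by_contra h
        have : a = 0 := by omega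
        subst this
        exact hX b (by omega) hbn (hvab ▸ hv0)
      set g := b - a with hg
      set m := n - g with hm
      have hgm : a + g = b := by omega
      have hmg : m + g = n := by omega
      have hma : a ≤ m := by omega
      have hmn : m < n := by omega
      have hm0 : 0 < m := by omega
      set v2 : ℕ → V := fun k => if k ≤ a then v k else v (k + g) with hv2def
      set e2 : ℕ → EdgeT := fun k => if k < a then e k else e (k + g) with he2def
      have hv2hi : ∀ k, a ≤ k → v2 k = v (k + g) := by
        intro k hk
        rcases Nat.eq_or_lt_of_le hk with h | h
        · subst h
          simp only [hv2def, if_pos (le_refl a)]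
          rw [hgm, hvab]
        · simp only [hv2def]
          rw [if_neg (show ¬ k ≤ a by omega)]
      have hv2lo : ∀ k, k ≤ a → v2 k = v k := by
        intro k hk; simp only [hv2def, if_pos hk]
      refine IH m hmn hm0 v2 e2 ?_ ?_ ?_ ?_ ?_ ?_ ?_
      · intro k hk hke
        by_cases hka : k < a
        · rw [hv2lo k (by omega), hv2lo (k+1) (by omega)]
          exact hfwd k (by omega) (by simpa [he2def, if_pos hka] using hke)
        · rw [hv2hi k (by omega), hv2hi (k+1) (by omega)]
          have : k + 1 + g = k + g + 1 := by omega
          rw [this]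
          exact hfwd (k + g) (by omega) (by simpa [he2def, if_neg hka] using hke)
      · intro k hk hke
        by_cases hka : k < a
        · rw [hv2lo k (by omega), hv2lo (k+1) (by omega)]
          exact hbwd k (by omega) (by simpa [he2def, if_pos hka] using hke)
        · rw [hv2hi k (by omega), hv2hi (k+1) (by omega)]
          have : k + 1 + g = k + g + 1 := by omega
          rw [this]
          exact hbwd (k + g) (by omega) (by simpa [he2def, if_neg hka] using hke)
      · intro k hk hke
        by_cases hka : k < a
        · rw [hv2lo k (by omega), hv2lo (k+1) (by omega)]
          exact hbid k (by omega) (by simpa [he2def, if_pos hka] using hke)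
        · rw [hv2hi k (by omega), hv2hi (k+1) (by omega)]
          have : k + 1 + g = k + g + 1 := by omega
          rw [this]
          exact hbid (k + g) (by omega) (by simpa [he2def, if_neg hka] using hke)
      · rw [hv2lo 0 (by omega)]; exact hv0
      · rw [hv2hi m hma, hmg]; exact hvn
      · intro k hk hkm
        by_cases hka : k ≤ a
        · rw [hv2lo k hka]; exact hX k hk (by omega)
        · rw [hv2hi k (by omega)]; exact hX (k + g) (by omega) (by omega)
      · simpa [he2def, if_pos (show (0:ℕ) < a by omega)] using he0


/-- **Property 1.** If there is no back-door path from `X` to `W` in the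
SCG `Gs`, then in every candidate FT-ADMG, every collider-free back-door path from
`X_{t-γ}` to `W_{t-λ}` passes through a micro vertex `X_{t-λ'}` with `λ' ≠ γ`. -/
theorem property1 {d : ℕ} {t0 tmax : ℤ} {γmax : ℕ}
    (Gs : SCG d) (X W : Fin d) (hXW : X ≠ W)
    (hnobd : ∀ (n : ℕ) (hn : 0 < n) (q : MPath (Fin d) Gs.dir Gs.bi n),
      q.v 0 = X → q.v (Fin.last n) = W → ¬ Gs.BackdoorStart q hn) :
    ∀ G : FTADMG d t0 tmax γmax, IsCandidate Gs G →
      ∀ (s1 s2 : ℤ) (n : ℕ) (hn : 0 < n) (p : MPath (Fin d × ℤ) G.dir G.bi n),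
        p.v 0 = (X, s1) → p.v (Fin.last n) = (W, s2) →
        (p.e ⟨0, hn⟩).headLeft → p.ColliderFree →
        ∃ i : Fin (n + 1), (p.v i).1 = X ∧ (p.v i).2 ≠ s1 := by
  intro G hG s1 s2 n hn p hp0 hpl hhead hcf
  by_contra hcon
  push_neg at hcon
  have hXonly : ∀ i : Fin (n+1), (p.v i).1 = X → i = 0 := by
    intro i hi
    apply p.inj
    rw [hp0]
    exact Prod.ext hi (hcon i hi)
  set v : ℕ → Fin d := fun k => (p.v ⟨min k n, by omega⟩).1 with hvdef
  set e : ℕ → EdgeT := fun k => p.e ⟨min k (n-1), by omega⟩ with hedef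
  have hV : ∀ (k : ℕ) (h : k < n + 1), v k = (p.v ⟨k, h⟩).1 := by
    intro k h
    simp only [hvdef]
    congr 2
    exact Fin.ext (by simp only []; omega)
  have hE : ∀ (k : ℕ) (h : k < n), e k = p.e ⟨k, h⟩ := by
    intro k h
    simp only [hedef]
    congr 1
    exact Fin.ext (by simp only []; omega)
  have hfwd : ∀ k, k < n → e k = EdgeT.fwd → Gs.dir (v k) (v (k+1)) := by
    intro k hk hke
    rw [hE k hk] at hke
    have hd := p.valid_fwd ⟨k, hk⟩ hke
    rw [hV k (by omega), hV (k+1) (by omega)]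
    exact (hG.1 _ _).2 ⟨(p.v ⟨k, by omega⟩).2, (p.v ⟨k+1, by omega⟩).2, hd⟩
  have hbwd : ∀ k, k < n → e k = EdgeT.bwd → Gs.dir (v (k+1)) (v k) := by
    intro k hk hke
    rw [hE k hk] at hke
    have hd := p.valid_bwd ⟨k, hk⟩ hke
    rw [hV k (by omega), hV (k+1) (by omega)]
    exact (hG.1 _ _).2 ⟨(p.v ⟨k+1, by omega⟩).2, (p.v ⟨k, by omega⟩).2, hd⟩
  have hbid : ∀ k, k < n → e k = EdgeT.bid → Gs.bi (v k) (v (k+1)) := by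
    intro k hk hke
    rw [hE k hk] at hke
    have hd := p.valid_bid ⟨k, hk⟩ hke
    rw [hV k (by omega), hV (k+1) (by omega)]
    exact (hG.2 _ _).2 ⟨(p.v ⟨k, by omega⟩).2, (p.v ⟨k+1, by omega⟩).2, hd⟩
  have hv0 : v 0 = X := by rw [hV 0 (by omega)]; rw [show (⟨0, by omega⟩ : Fin (n+1)) = 0 from rfl, hp0]
  have hvn : v n = W := by
    rw [hV n (by omega)]
    rw [show (⟨n, by omega⟩ : Fin (n+1)) = Fin.last n from rfl, hpl]
  have hXu : ∀ k, 0 < k → k ≤ n → v k ≠ X := by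
    intro k hk1 hk2 hk3
    rw [hV k (by omega)] at hk3
    have := hXonly ⟨k, by omega⟩ hk3
    have : k = 0 := by simpa [Fin.ext_iff] using this
    omega
  have he0 : e 0 = EdgeT.bwd ∨ e 0 = EdgeT.bid := by
    rw [hE 0 hn]
    rcases he : p.e ⟨0, hn⟩ with _ | _ | _
    · rw [he] at hhead; simp [EdgeT.headLeft] at hhead
    · exact Or.inl rfl
    · exact Or.inr rfl
  obtain ⟨m, hm, q, hq0, hql, hqe⟩ :=
    extract_backdoor hXW n hn v e hfwd hbwd hbid hv0 hvn hXu he0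
  exact hnobd m hm q hq0 hql (hqe.elim Or.inl (fun h => Or.inr (Or.inl h)))
end

section
/- (Lemma 3) Let G^s be an SCG, let X ≠ Y be macro vertices, let 𝕎 be a set of macro vertices with X, Y ∉ 𝕎 that satisfies Conditions 1–3 of the SCG-front-door criterion relative to (X_{t−γ}, Y_t), where 0 ≤ γ ≤ γmax, t0 ≤ t − γ − γmax and t ≤ tmax. If Cycles(X, G^s) = {X → X} (the self-loop is the only directed cycle containing X) and there is no macro vertex Z ∈ Anc(X, G^s) with X ↔ Z in G^s, then for every W_{t−λ} ∈ {W_{t−γ+ℓ} : W ∈ 𝕎, 0 ≤ ℓ ≤ γ} and every candidate FT-ADMG G ∈ C(G^s), the micro-vertex set {B_{t−γ−ℓ} : 0 ≤ ℓ ≤ γmax, B ∈ Par(X, G^s) \ {X}} ∪ {X_{t−γ−ℓ} : 1 ≤ ℓ ≤ γmax} blocks every back-door path from X_{t−γ} to W_{t−λ} in G and contains no descendant of X_{t−γ} in G. -/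
/-- The conditioning set of Lemma 3:
`{B_{t-γ-ℓ} : 0 ≤ ℓ ≤ γmax, B ∈ Par(X, Gs) \ {X}} ∪ {X_{t-γ-ℓ} : 1 ≤ ℓ ≤ γmax}`. -/
def lemma3Set {d : ℕ} (Gs : SCG d) (X : Fin d) (t : ℤ) (γ γmax : ℕ) :
    Set (Fin d × ℤ) :=
  {a | ∃ ℓ : ℤ, 0 ≤ ℓ ∧ ℓ ≤ (γmax : ℤ) ∧ a.2 = t - (γ : ℤ) - ℓ ∧
    Gs.dir a.1 X ∧ a.1 ≠ X} ∪
  {a | ∃ ℓ : ℤ, 1 ≤ ℓ ∧ ℓ ≤ (γmax : ℤ) ∧ a = (X, t - (γ : ℤ) - ℓ)}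

/-!
A back-door path from `X_{t-γ}` starts with `B → X_{t-γ}` or with `X_{t-γ} ↔ Z`. In the first
case `B` is a lagged parent of `X_{t-γ}`, hence a non-collider in the conditioning set, unless
the path is the single edge `W → X_{t-γ}`, which Condition 2 excludes. In the second case every
vertex of the conditioning set is an ancestor of `X` in `Gs`. If the path were open, each of its
colliders would be one too; since `Z` is not an ancestor of `X`, the path would then have to
continue `Z → ⋯ → W_{t-λ}`, and its projection `X ↔ Z → ⋯ → W` would be a back-door path of `Gs`
without strict colliders, contradicting Condition 2.

No vertex of the conditioning set descends from `X_{t-γ}`: the lagged copies of `X` lie in its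
past, and a parent `B ≠ X` of `X` reached from `X` would close a directed cycle through `X` other
than the self-loop.
-/

theorem exists_nodup_isChain_cons_of_reflTransGen {α : Type*} {r : α → α → Prop} {a b : α}
    (h : Relation.ReflTransGen r a b) :
    ∃ l, List.IsChain r (a :: l) ∧ (a :: l).getLast (List.cons_ne_nil _ _) = b ∧
      (a :: l).Nodup := by
  induction h using Relation.ReflTransGen.head_induction_on with
  | refl => exact ⟨[], .singleton _, rfl, List.nodup_singleton _⟩
  | @head x c hxc _ ih =>
    obtain ⟨l, hchain, hlast, hnodup⟩ := ih
    by_cases hx : x ∈ c :: l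
    · obtain ⟨s, l', hsplit⟩ := List.mem_iff_append.1 hx
      simp only [hsplit] at hchain hlast hnodup
      rw [List.getLast_append_of_right_ne_nil _ _ (List.cons_ne_nil _ _)] at hlast
      exact ⟨l', hchain.right_of_append, hlast, hnodup.of_append_right⟩
    · exact ⟨c :: l, List.isChain_cons_cons.2 ⟨hxc, hchain⟩, hlast,
        List.nodup_cons.2 ⟨hx, hnodup⟩⟩

namespace MPath

variable {V : Type} {dir bi : V → V → Prop} {n : ℕ}

theorem reach_last_or_collider (p : MPath V dir bi n) {c : V} (k : ℕ) (hk : 0 < k)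
    (hkn : k ≤ n) (hhead : (p.e ⟨k - 1, by omega⟩).headRight)
    (hc : Relation.ReflTransGen dir c (p.v ⟨k, by omega⟩)) :
    Relation.ReflTransGen dir c (p.v (Fin.last n)) ∨
      ∃ (i : ℕ) (h1 : 0 < i) (h2 : i < n),
        p.Collider i h1 h2 ∧ Relation.ReflTransGen dir c (p.v ⟨i, by omega⟩) := by
  obtain rfl | hlt := hkn.eq_or_lt
  · exact .inl hc
  cases he : p.e ⟨k, hlt⟩ with
  | fwd =>
    refine p.reach_last_or_collider (k + 1) (by omega) hlt (by simp [he, EdgeT.headRight]) ?_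
    exact hc.tail (p.valid_fwd ⟨k, hlt⟩ he)
  | bwd => exact .inr ⟨k, hk, hlt, ⟨hhead, by simp [he, EdgeT.headLeft]⟩, hc⟩
  | bid => exact .inr ⟨k, hk, hlt, ⟨hhead, by simp [he, EdgeT.headLeft]⟩, hc⟩
termination_by n - k

def ofBidIsChain {x z : V} {l : List V} (hxz : bi x z) (hchain : List.IsChain dir (z :: l))
    (hnodup : (x :: z :: l).Nodup) : MPath V dir bi (l.length + 1) where
  v i := (x :: z :: l)[i]
  e := Fin.cons .bid fun _ => .fwd
  inj _ _ h := Fin.ext (hnodup.getElem_inj_iff.1 h)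
  valid_fwd k hk := by
    induction k using Fin.cases with
    | zero => simp at hk
    | succ k =>
      have := List.isChain_iff_getElem.1 hchain k (by simp)
      simp only [List.getElem_cons_succ] at this
      simpa using this
  valid_bwd k hk := by
    induction k using Fin.cases <;> simp at hk
  valid_bid k hk := by
    induction k using Fin.cases with
    | zero => simpa using hxz
    | succ k => simp at hk

theorem ofBidIsChain_e_ne_bwd {x z : V} {l : List V} (hxz : bi x z)
    (hchain : List.IsChain dir (z :: l)) (hnodup : (x :: z :: l).Nodup) (k : Fin (l.length + 1)) :
    (ofBidIsChain hxz hchain hnodup).e k ≠ .bwd := by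
  induction k using Fin.cases <;> simp [ofBidIsChain]

end MPath

section Candidate

variable {d : ℕ} {t0 tmax : ℤ} {γmax : ℕ} {Gs : SCG d} {G : FTADMG d t0 tmax γmax}
  {a b : Fin d × ℤ}

theorem IsCandidate.dir_fst (hG : IsCandidate Gs G) (h : G.dir a b) : Gs.dir a.1 b.1 :=
  (hG.1 a.1 b.1).2 ⟨a.2, b.2, h⟩

theorem IsCandidate.bi_fst (hG : IsCandidate Gs G) (h : G.bi a b) : Gs.bi a.1 b.1 :=
  (hG.2 a.1 b.1).2 ⟨a.2, b.2, h⟩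

theorem IsCandidate.reflTransGen_fst (hG : IsCandidate Gs G)
    (h : Relation.ReflTransGen G.dir a b) : Relation.ReflTransGen Gs.dir a.1 b.1 :=
  h.lift Prod.fst fun _ _ => hG.dir_fst

theorem FTADMG.snd_le_of_reflTransGen (G : FTADMG d t0 tmax γmax)
    (h : Relation.ReflTransGen G.dir a b) : a.2 ≤ b.2 := by
  induction h with
  | refl => exact le_rfl
  | tail _ hbc ih => exact ih.trans (G.dir_time _ _ hbc).1

end Candidate

namespace SCG.Cond2

variable {d : ℕ} {Gs : SCG d} {X W Z : Fin d} {Ws : Set (Fin d)}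

theorem not_dir (hc2 : Gs.Cond2 X Ws) (hW : W ∈ Ws) (hXW : X ≠ W) : ¬ Gs.dir W X := by
  intro hWX
  let p : MPath (Fin d) Gs.dir Gs.bi 1 :=
    { v := ![X, W]
      e := fun _ => .bwd
      inj := by intro i j hij; fin_cases i <;> fin_cases j <;> simp_all [eq_comm]
      valid_fwd := by simp
      valid_bwd := fun k _ => by fin_cases k; simpa using hWX
      valid_bid := by simp }
  exact hc2 1 one_pos p rfl hW (.inl rfl) fun _ _ _ => by omega

theorem not_reach_of_bi (hc2 : Gs.Cond2 X Ws) (hXZ : Gs.bi X Z)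
    (hZX : ¬ Relation.ReflTransGen Gs.dir Z X) (hW : W ∈ Ws) :
    ¬ Relation.ReflTransGen Gs.dir Z W := by
  intro hZW
  obtain ⟨l, hchain, hlast, hnodup⟩ := exists_nodup_isChain_cons_of_reflTransGen hZW
  have hX : X ∉ Z :: l := fun hX =>
    hZX (hchain.induction (Relation.ReflTransGen Gs.dir Z ·) _ (fun _ _ h ih => ih.tail h)
      (fun _ => .refl) X hX)
  let p := MPath.ofBidIsChain hXZ hchain (List.nodup_cons.2 ⟨hX, hnodup⟩)
  have hpn : p.v (Fin.last _) = W := by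
    rw [← hlast, List.getLast_eq_getElem]
    rfl
  exact hc2 _ (Nat.succ_pos _) p rfl (hpn ▸ hW) (.inr (.inl rfl))
    fun i _ _ hcol => MPath.ofBidIsChain_e_ne_bwd hXZ hchain _ _ hcol.2.1

end SCG.Cond2

section Lemma3Set

variable {d : ℕ} {t0 tmax : ℤ} {γmax : ℕ} {Gs : SCG d} {G : FTADMG d t0 tmax γmax}
  {X W : Fin d} {Ws : Set (Fin d)} {t : ℤ} {γ : ℕ} {b : Fin d × ℤ}

theorem reflTransGen_fst_of_mem_lemma3Set (hb : b ∈ lemma3Set Gs X t γ γmax) :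
    Relation.ReflTransGen Gs.dir b.1 X := by
  rcases hb with ⟨-, -, -, -, hbX, -⟩ | ⟨-, -, -, rfl⟩
  · exact .single hbX
  · exact .refl

theorem mem_lemma3Set_of_dir (hG : IsCandidate Gs G) (hb : G.dir b (X, t - γ))
    (hne : b ≠ (X, t - γ)) : b ∈ lemma3Set Gs X t γ γmax := by
  obtain ⟨hle, hlag⟩ := G.dir_time _ _ hb
  by_cases hbX : b.1 = X
  · have hlt : b.2 ≠ t - γ := fun h => hne (Prod.ext hbX h)
    exact .inr ⟨t - γ - b.2, by omega, hlag, Prod.ext hbX (by simp)⟩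
  · exact .inl ⟨t - γ - b.2, by omega, hlag, by omega, hG.dir_fst hb, hbX⟩

theorem not_reflTransGen_of_mem_lemma3Set (hG : IsCandidate Gs G)
    (honly : ∀ Z, Relation.ReflTransGen Gs.dir X Z → Gs.dir Z X → Z = X)
    (hb : b ∈ lemma3Set Gs X t γ γmax) : ¬ Relation.ReflTransGen G.dir (X, t - γ) b := by
  intro hreach
  rcases hb with ⟨-, -, -, -, hbX, hne⟩ | ⟨ℓ, hℓ, -, rfl⟩
  · exact hne (honly _ (hG.reflTransGen_fst hreach) hbX)
  · have := G.snd_le_of_reflTransGen hreach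
    simp only at this
    omega

variable {n : ℕ} (p : MPath (Fin d × ℤ) G.dir G.bi n) (hn : 0 < n) {s : ℤ}

theorem blockedBy_lemma3Set_of_bwd (hG : IsCandidate Gs G) (hc2 : Gs.Cond2 X Ws)
    (hXWs : X ∉ Ws) (hW : W ∈ Ws) (hp0 : p.v 0 = (X, t - γ)) (hpn : p.v (Fin.last n) = (W, s))
    (he : p.e ⟨0, hn⟩ = .bwd) : p.BlockedBy (lemma3Set Gs X t γ γmax) := by
  have hparent : G.dir (p.v ⟨1, by omega⟩) (X, t - γ) := hp0 ▸ p.valid_bwd ⟨0, hn⟩ he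
  obtain rfl | hn1 := (Nat.one_le_of_lt hn).eq_or_lt
  · have hWX : G.dir (W, s) (X, t - γ) := hpn ▸ hparent
    exact absurd (hG.dir_fst hWX) (hc2.not_dir hW fun h => hXWs (h ▸ hW))
  · refine ⟨1, one_pos, hn1, .inl ⟨fun hcol => by simpa [he, EdgeT.headRight] using hcol.1,
      mem_lemma3Set_of_dir hG hparent ?_⟩⟩
    rw [← hp0]
    exact p.inj.ne (by simp [Fin.ext_iff])

theorem blockedBy_lemma3Set_of_bid (hG : IsCandidate Gs G) (hc2 : Gs.Cond2 X Ws)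
    (hconf : ∀ Z, Gs.bi X Z → ¬ Relation.ReflTransGen Gs.dir Z X) (hW : W ∈ Ws)
    (hp0 : p.v 0 = (X, t - γ)) (hpn : p.v (Fin.last n) = (W, s)) (he : p.e ⟨0, hn⟩ = .bid) :
    p.BlockedBy (lemma3Set Gs X t γ γmax) := by
  have hbi : G.bi (X, t - γ) (p.v ⟨1, by omega⟩) := hp0 ▸ p.valid_bid ⟨0, hn⟩ he
  have hZX := hconf _ (hG.bi_fst hbi)
  rcases p.reach_last_or_collider 1 one_pos hn (by simp [he, EdgeT.headRight]) .refl with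
    hlast | ⟨i, h1, h2, hcol, hreach⟩
  · rw [hpn] at hlast
    exact absurd (hG.reflTransGen_fst hlast) (hc2.not_reach_of_bi (hG.bi_fst hbi) hZX hW)
  · refine ⟨i, h1, h2, .inr ⟨hcol, fun w hw hwZ => hZX ?_⟩⟩
    exact (hG.reflTransGen_fst (hreach.trans hw)).trans (reflTransGen_fst_of_mem_lemma3Set hwZ)

end Lemma3Set

theorem lemma3_general {d : ℕ} {t0 tmax : ℤ} {γmax : ℕ}
    (Gs : SCG d) (X Y : Fin d) (Ws : Set (Fin d))
    (hXWs : X ∉ Ws)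
    (γ : ℕ) (t : ℤ)
    (hfd : Gs.FrontDoor123 X Y Ws)
    (honly : ∀ Z, Relation.ReflTransGen Gs.dir X Z → Gs.dir Z X → Z = X)
    (hconf : ¬ ∃ Z, Relation.ReflTransGen Gs.dir Z X ∧ (Gs.bi X Z ∨ Gs.bi Z X)) :
    ∀ W ∈ Ws, ∀ ℓw : ℤ, 0 ≤ ℓw → ℓw ≤ (γ : ℤ) →
    ∀ G : FTADMG d t0 tmax γmax, IsCandidate Gs G →
      (∀ (n : ℕ) (hn : 0 < n) (p : MPath (Fin d × ℤ) G.dir G.bi n),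
        p.v 0 = (X, t - (γ : ℤ)) → p.v (Fin.last n) = (W, t - (γ : ℤ) + ℓw) →
        (p.e ⟨0, hn⟩).headLeft → p.BlockedBy (lemma3Set Gs X t γ γmax)) ∧
      (∀ b ∈ lemma3Set Gs X t γ γmax,
        ¬ Relation.ReflTransGen G.dir (X, t - (γ : ℤ)) b) := by
  intro W hW ℓw _ _ G hG
  have hc2 := hfd.2.1
  refine ⟨fun n hn p hp0 hpn hhead => ?_,
    fun b hb => not_reflTransGen_of_mem_lemma3Set hG honly hb⟩
  cases he : p.e ⟨0, hn⟩ with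
  | fwd => simp [he, EdgeT.headLeft] at hhead
  | bwd => exact blockedBy_lemma3Set_of_bwd p hn hG hc2 hXWs hW hp0 hpn he
  | bid =>
    exact blockedBy_lemma3Set_of_bid p hn hG hc2 (fun Z hXZ hZX => hconf ⟨Z, hZX, .inl hXZ⟩)
      hW hp0 hpn he

/-- **Lemma 3.** Under Conditions 1–3 of the SCG-front-door criterion,
if the self-loop `X → X` is the only directed cycle containing `X` and there is no
`Z ∈ Anc(X, Gs)` with `X ↔ Z`, then `lemma3Set` blocks every back-door path from
`X_{t-γ}` to `W_{t-λ}` and contains no descendant of `X_{t-γ}` in any candidate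
FT-ADMG. -/
theorem lemma3 {d : ℕ} {t0 tmax : ℤ} {γmax : ℕ}
    (Gs : SCG d) (X Y : Fin d) (Ws : Set (Fin d))
    (hXY : X ≠ Y) (hXWs : X ∉ Ws) (hYWs : Y ∉ Ws)
    (γ : ℕ) (hγ : γ ≤ γmax) (t : ℤ)
    (ht0 : t0 ≤ t - (γ : ℤ) - (γmax : ℤ)) (ht : t ≤ tmax)
    (hfd : Gs.FrontDoor123 X Y Ws)
    (hself : Gs.dir X X)
    (honly : ∀ Z, Relation.ReflTransGen Gs.dir X Z → Gs.dir Z X → Z = X)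
    (hconf : ¬ ∃ Z, Relation.ReflTransGen Gs.dir Z X ∧ (Gs.bi X Z ∨ Gs.bi Z X)) :
    ∀ W ∈ Ws, ∀ ℓw : ℤ, 0 ≤ ℓw → ℓw ≤ (γ : ℤ) →
    ∀ G : FTADMG d t0 tmax γmax, IsCandidate Gs G →
      (∀ (n : ℕ) (hn : 0 < n) (p : MPath (Fin d × ℤ) G.dir G.bi n),
        p.v 0 = (X, t - (γ : ℤ)) → p.v (Fin.last n) = (W, t - (γ : ℤ) + ℓw) →
        (p.e ⟨0, hn⟩).headLeft → p.BlockedBy (lemma3Set Gs X t γ γmax)) ∧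
      (∀ b ∈ lemma3Set Gs X t γ γmax,
        ¬ Relation.ReflTransGen G.dir (X, t - (γ : ℤ)) b) :=
  lemma3_general Gs X Y Ws hXWs γ t hfd honly hconf
end

section
/- (Property 2) Let G^s be an SCG with macro vertices W, Y and X (W ≠ Y) such that every back-door path from W to Y in G^s is blocked by {X}. Then in every candidate FT-ADMG G ∈ C(G^s), every back-door path from W_{t−λ} to Y_t in G that contains no collider (i.e., is active given the empty set) passes through a micro vertex X_{t−λ'} of the macro vertex X or through a micro vertex W_{t−λ''} of the macro vertex W with λ'' ≠ λ. -/
/-!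
Project the micro path onto macro vertices. Having no collider and an arrowhead at its start,
the micro path reads `← ⋯ ← (↔ or →) → ⋯ →`; the projection is a walk of the same shape in
the SCG, and so is every walk obtained from it by cutting out a cycle, since the shape only
constrains the order of the edges. Cutting all cycles yields an SCG path from `W` to `Y` without
strict colliders that avoids `X`, which `{X}` cannot block. It stays a back-door path because
the macro vertex `W` occurs on the micro path only at its start, so every visit of `W` on the
walk is left through an edge with an arrowhead at `W`, and cutting cycles preserves this.
-/

namespace EdgeT

variable {V V' : Type}

def Joins (dir bi : V → V → Prop) : EdgeT → V → V → Prop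
  | fwd, a, b => dir a b
  | bwd, a, b => dir b a
  | bid, a, b => bi a b

theorem Joins.map {dir bi : V → V → Prop} {dir' bi' : V' → V' → Prop} {e : EdgeT} {a b : V}
    (f : V → V') (hdir : ∀ a b, dir a b → dir' (f a) (f b))
    (hbi : ∀ a b, bi a b → bi' (f a) (f b)) (h : e.Joins dir bi a b) :
    e.Joins dir' bi' (f a) (f b) := by
  cases e
  exacts [hdir _ _ h, hdir _ _ h, hbi _ _ h]

end EdgeT

namespace MPath

variable {V : Type} {dir bi : V → V → Prop} {n : ℕ}

/-- `ℕ`-indexed view of a path, so that walks can be reindexed without `Fin` casts;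
indices past the end give junk values (the last vertex, a forward edge). -/
def vertexAt (p : MPath V dir bi n) (k : ℕ) : V :=
  p.v (Fin.clamp k n)

def edgeAt (p : MPath V dir bi n) (k : ℕ) : EdgeT :=
  if h : k < n then p.e ⟨k, h⟩ else .fwd

theorem vertexAt_of_le (p : MPath V dir bi n) {k : ℕ} (hk : k ≤ n) :
    p.vertexAt k = p.v ⟨k, by omega⟩ := by
  simp only [vertexAt, Fin.clamp, Nat.min_eq_left hk]

theorem edgeAt_of_lt (p : MPath V dir bi n) {k : ℕ} (hk : k < n) :
    p.edgeAt k = p.e ⟨k, hk⟩ :=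
  dif_pos hk

theorem joins_edgeAt (p : MPath V dir bi n) {k : ℕ} (hk : k < n) :
    (p.edgeAt k).Joins dir bi (p.vertexAt k) (p.vertexAt (k + 1)) := by
  rw [edgeAt_of_lt p hk, vertexAt_of_le p hk.le, vertexAt_of_le p hk]
  cases h : p.e ⟨k, hk⟩
  exacts [p.valid_fwd _ h, p.valid_bwd _ h, p.valid_bid _ h]

theorem ColliderFree.edgeAt_succ_eq_fwd {p : MPath V dir bi n} (hp : p.ColliderFree) {k : ℕ}
    (hk : k + 1 < n) (hhead : (p.edgeAt k).headRight) : p.edgeAt (k + 1) = .fwd := by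
  have hnc := hp (k + 1) k.succ_pos hk
  simp only [Collider, Nat.add_sub_cancel] at hnc
  rw [edgeAt_of_lt p (by omega)] at hhead
  rw [edgeAt_of_lt p hk]
  cases h : p.e ⟨k + 1, hk⟩
  · rfl
  all_goals exact absurd ⟨hhead, by simp [h, EdgeT.headLeft]⟩ hnc

theorem ColliderFree.edgeAt_eq_fwd {p : MPath V dir bi n} (hp : p.ColliderFree) {k m : ℕ}
    (hkm : k < m) (hm : m < n) (hhead : (p.edgeAt k).headRight) : p.edgeAt m = .fwd := by
  induction m, hkm using Nat.le_induction with
  | base => exact hp.edgeAt_succ_eq_fwd hm hhead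
  | succ m hkm ih =>
    exact hp.edgeAt_succ_eq_fwd hm (by rw [ih (by omega)]; trivial)

end MPath

section Walk

variable {V : Type} {dir bi : V → V → Prop} {W Y X : V} {n : ℕ} {v : ℕ → V} {e : ℕ → EdgeT}

/-- A walk `v 0, e 0, v 1, …, e (n - 1), v n` (vertices may repeat) of shape
`← ⋯ ← (↔ or →) → ⋯ →`; values of `v` and `e` beyond it are ignored. -/
structure IsOpenBackdoorWalk (dir bi : V → V → Prop) (W Y X : V) (n : ℕ) (v : ℕ → V)
    (e : ℕ → EdgeT) : Prop where
  joins : ∀ k < n, (e k).Joins dir bi (v k) (v (k + 1))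
  eq_fwd_of_headRight : ∀ k m, k < m → m < n → (e k).headRight → e m = .fwd
  start : v 0 = W
  finish : v n = Y
  ne_X : ∀ k ≤ n, v k ≠ X
  headLeft_of_eq_W : ∀ k ≤ n, v k = W → k < n ∧ (e k).headLeft

namespace IsOpenBackdoorWalk

theorem pos (h : IsOpenBackdoorWalk dir bi W Y X n v e) : 0 < n :=
  (h.headLeft_of_eq_W 0 n.zero_le h.start).1

/-- Reindexing that skips the positions `i + 1, …, j` of a walk. -/
def skipIndex (i j k : ℕ) : ℕ :=
  if k < i then k else k + (j - i)

theorem skipIndex_strictMono (i j : ℕ) : StrictMono (skipIndex i j) := by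
  intro k m hkm
  simp only [skipIndex]
  split_ifs <;> omega

theorem skipIndex_lt {i j n k : ℕ} (hjn : j ≤ n) : skipIndex i j k < n ↔ k < n - (j - i) := by
  simp only [skipIndex]
  split_ifs <;> omega

theorem skipIndex_succ {i j k : ℕ} (hki : k + 1 ≠ i) :
    skipIndex i j (k + 1) = skipIndex i j k + 1 := by
  simp only [skipIndex]
  split_ifs <;> omega

theorem shortcut (h : IsOpenBackdoorWalk dir bi W Y X n v e) {i j : ℕ} (hij : i < j)
    (hjn : j ≤ n) (hv : v i = v j) :
    IsOpenBackdoorWalk dir bi W Y X (n - (j - i)) (v ∘ skipIndex i j) (e ∘ skipIndex i j) := by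
  have hskip_le : ∀ {k}, k ≤ n - (j - i) → skipIndex i j k ≤ n := fun hk => by
    simp only [skipIndex]; split_ifs <;> omega
  refine ⟨fun k hk => ?_, fun k m hkm hm hhead => ?_, ?_, ?_, fun k hk => h.ne_X _ (hskip_le hk),
    fun k hk hkW => ?_⟩
  · by_cases hki : k + 1 = i
    · have hjoin := h.joins k (by omega)
      rw [hki, hv] at hjoin
      have hk_skip : skipIndex i j k = k := if_pos (by omega)
      have hi_skip : skipIndex i j (k + 1) = j := by
        simp only [skipIndex]; split_ifs <;> omega
      simpa only [Function.comp, hk_skip, hi_skip] using hjoin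
    · simpa only [Function.comp, skipIndex_succ hki] using
        h.joins _ ((skipIndex_lt hjn).2 hk)
  · exact h.eq_fwd_of_headRight _ _ (skipIndex_strictMono i j hkm) ((skipIndex_lt hjn).2 hm) hhead
  · rcases Nat.eq_zero_or_pos i with rfl | hi
    · simpa [skipIndex, ← hv] using h.start
    · simpa [skipIndex, hi] using h.start
  · have : skipIndex i j (n - (j - i)) = n := by simp only [skipIndex]; split_ifs <;> omega
    simpa [this] using h.finish
  · obtain ⟨hlt, hhead⟩ := h.headLeft_of_eq_W _ (hskip_le hk) hkW
    exact ⟨(skipIndex_lt hjn).1 hlt, hhead⟩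

theorem exists_injOn (h : IsOpenBackdoorWalk dir bi W Y X n v e) :
    ∃ (m : ℕ) (v' : ℕ → V) (e' : ℕ → EdgeT),
      IsOpenBackdoorWalk dir bi W Y X m v' e' ∧ Set.InjOn v' (Set.Iic m) := by
  induction n using Nat.strong_induction_on generalizing v e with
  | _ n ih =>
    by_cases hinj : Set.InjOn v (Set.Iic n)
    · exact ⟨n, v, e, h, hinj⟩
    obtain ⟨i, hi, j, hj, hv, hij⟩ : ∃ i ≤ n, ∃ j ≤ n, v i = v j ∧ i ≠ j := by
      simpa [Set.InjOn] using hinj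
    rcases Nat.lt_or_gt_of_ne hij with hij | hji
    · exact ih _ (by omega) (h.shortcut hij hj hv)
    · exact ih _ (by omega) (h.shortcut hji hi hv.symm)

def toMPath (h : IsOpenBackdoorWalk dir bi W Y X n v e) (hinj : Set.InjOn v (Set.Iic n)) :
    MPath V dir bi n where
  v i := v i
  e k := e k
  inj i j hij := Fin.ext (hinj (Nat.lt_succ_iff.1 i.2) (Nat.lt_succ_iff.1 j.2) hij)
  valid_fwd k hk := by simpa [hk, EdgeT.Joins] using h.joins k k.2
  valid_bwd k hk := by simpa [hk, EdgeT.Joins] using h.joins k k.2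
  valid_bid k hk := by simpa [hk, EdgeT.Joins] using h.joins k k.2

end IsOpenBackdoorWalk

theorem MPath.isOpenBackdoorWalk_map {V' : Type} {dir' bi' : V' → V' → Prop}
    (p : MPath V' dir' bi' n) (f : V' → V) (hdir : ∀ a b, dir' a b → dir (f a) (f b))
    (hbi : ∀ a b, bi' a b → bi (f a) (f b)) (hcf : p.ColliderFree) (hn : 0 < n)
    (hhead : (p.e ⟨0, hn⟩).headLeft) (h0 : f (p.v 0) = W) (hY : f (p.v (Fin.last n)) = Y)
    (hX : ∀ i, f (p.v i) ≠ X) (hW : ∀ i, f (p.v i) = W → i = 0) :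
    IsOpenBackdoorWalk dir bi W Y X n (f ∘ p.vertexAt) p.edgeAt where
  joins k hk := (p.joins_edgeAt hk).map f hdir hbi
  eq_fwd_of_headRight _ _ hkm hm hhead := hcf.edgeAt_eq_fwd hkm hm hhead
  start := by simpa [p.vertexAt_of_le n.zero_le] using h0
  finish := by rw [Function.comp, p.vertexAt_of_le le_rfl]; exact hY
  ne_X k hk := by simpa [p.vertexAt_of_le hk] using hX _
  headLeft_of_eq_W k hk hkW := by
    rw [Function.comp, p.vertexAt_of_le hk] at hkW
    obtain rfl : k = 0 := congrArg Fin.val (hW _ hkW)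
    exact ⟨hn, by rwa [p.edgeAt_of_lt hn]⟩

end Walk

namespace SCG

variable {d : ℕ} {Gs : SCG d} {W Y X : Fin d} {n : ℕ} {v : ℕ → Fin d} {e : ℕ → EdgeT}

theorem backdoorStart_toMPath (h : IsOpenBackdoorWalk Gs.dir Gs.bi W Y X n v e)
    (hinj : Set.InjOn v (Set.Iic n)) : Gs.BackdoorStart (h.toMPath hinj) h.pos := by
  have hhead := (h.headLeft_of_eq_W 0 n.zero_le h.start).2
  change e 0 = .bwd ∨ e 0 = .bid ∨ _
  cases h0 : e 0 <;> simp_all [EdgeT.headLeft]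

theorem not_blockedByOne_toMPath (h : IsOpenBackdoorWalk Gs.dir Gs.bi W Y X n v e)
    (hinj : Set.InjOn v (Set.Iic n)) : ¬ Gs.BlockedByOne (h.toMPath hinj) X := by
  rintro (⟨i, hi, hin, ⟨hfwd, hbwd, -⟩, -⟩ | ⟨i, hi, hin, hiX, -⟩)
  · change e (i - 1) = .fwd at hfwd
    change e i = .bwd at hbwd
    have := h.eq_fwd_of_headRight (i - 1) i (by omega) hin (by simp [hfwd, EdgeT.headRight])
    simp [hbwd] at this
  · exact h.ne_X i hin.le hiX

end SCG

namespace IsCandidate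

variable {d : ℕ} {t0 tmax : ℤ} {γmax : ℕ} {Gs : SCG d} {G : FTADMG d t0 tmax γmax}

theorem dir_fst_s7 (hG : IsCandidate Gs G) (a b : Fin d × ℤ) (h : G.dir a b) : Gs.dir a.1 b.1 :=
  (hG.1 _ _).2 ⟨a.2, b.2, h⟩

theorem bi_fst_s7 (hG : IsCandidate Gs G) (a b : Fin d × ℤ) (h : G.bi a b) : Gs.bi a.1 b.1 :=
  (hG.2 _ _).2 ⟨a.2, b.2, h⟩

end IsCandidate

theorem property2_general {d : ℕ} {t0 tmax : ℤ} {γmax : ℕ}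
    (Gs : SCG d) (W Y X : Fin d)
    (hbd : ∀ (n : ℕ) (hn : 0 < n) (q : MPath (Fin d) Gs.dir Gs.bi n),
      q.v 0 = W → q.v (Fin.last n) = Y → Gs.BackdoorStart q hn →
      Gs.BlockedByOne q X) :
    ∀ G : FTADMG d t0 tmax γmax, IsCandidate Gs G →
      ∀ (s1 s2 : ℤ) (n : ℕ) (hn : 0 < n) (p : MPath (Fin d × ℤ) G.dir G.bi n),
        p.v 0 = (W, s1) → p.v (Fin.last n) = (Y, s2) →
        (p.e ⟨0, hn⟩).headLeft → p.ColliderFree →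
        ∃ i : Fin (n + 1), (p.v i).1 = X ∨ ((p.v i).1 = W ∧ (p.v i).2 ≠ s1) := by
  intro G hG s1 s2 n hn p h0 hY hhead hcf
  by_contra! hcon
  have hW : ∀ i, (p.v i).1 = W → i = 0 := fun i hi =>
    p.inj (h0 ▸ Prod.ext hi ((hcon i).2 hi))
  have hwalk := p.isOpenBackdoorWalk_map (W := W) (Y := Y) Prod.fst hG.dir_fst_s7 hG.bi_fst_s7 hcf
    hn hhead (by simp [h0]) (by simp [hY]) (fun i => (hcon i).1) hW
  obtain ⟨m, v, e, hpath, hinj⟩ := hwalk.exists_injOn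
  exact SCG.not_blockedByOne_toMPath hpath hinj
    (hbd m hpath.pos _ hpath.start hpath.finish (SCG.backdoorStart_toMPath hpath hinj))

/-- **Property 2.** If every back-door path from `W` to `Y` in the SCG
`Gs` is blocked by `{X}`, then in every candidate FT-ADMG, every collider-free
back-door path from `W_{t-λ}` to `Y_t` passes through a micro vertex of the macro
vertex `X` or through a micro vertex `W_{t-λ''}` with `λ'' ≠ λ`. -/
theorem property2 {d : ℕ} {t0 tmax : ℤ} {γmax : ℕ}
    (Gs : SCG d) (W Y X : Fin d) (hWY : W ≠ Y)
    (hbd : ∀ (n : ℕ) (hn : 0 < n) (q : MPath (Fin d) Gs.dir Gs.bi n),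
      q.v 0 = W → q.v (Fin.last n) = Y → Gs.BackdoorStart q hn →
      Gs.BlockedByOne q X) :
    ∀ G : FTADMG d t0 tmax γmax, IsCandidate Gs G →
      ∀ (s1 s2 : ℤ) (n : ℕ) (hn : 0 < n) (p : MPath (Fin d × ℤ) G.dir G.bi n),
        p.v 0 = (W, s1) → p.v (Fin.last n) = (Y, s2) →
        (p.e ⟨0, hn⟩).headLeft → p.ColliderFree →
        ∃ i : Fin (n + 1), (p.v i).1 = X ∨ ((p.v i).1 = W ∧ (p.v i).2 ≠ s1) :=
  property2_general Gs W Y X hbd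
end
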